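/- arXiv:2004.02475 — 4 statements merged into one kernel-verified Lean document; each statement's English description precedes it below -/
import Mathlib

section
/- Let F : ℂ^n → ℝ be a smooth plurisubharmonic function near 0, and fix a ∈ ℕ^n (all a_j ≥ 1) and l ∈ ℕ. Suppose F_κ(z,z̄) = Σ_{⟨a,α+β⟩=l} C_{αβ} z^α z̄^β is the 'κ-part' of the Taylor series of F at 0, where l = min{⟨a,ξ⟩ : ξ ∈ S(F)} (so F(r^a • z) = r^l F_κ(z) + o(r^l) as r → 0+, uniformly for z in compact sets). Then the polynomial F_κ is plurisubharmonic on ℂ^n. -/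
open Finset ComplexConjugate MeasureTheory Filter ContDiff

/-- Taylor-type bound: if the derivatives of `g` up to order `k` vanish at `0` and the `k`-th
derivative oscillates by at most `M` on `[0, r0]`, then
`|g r - g^(k)(0) r^k / k!| ≤ M r^k` there. -/
lemma lemD' : ∀ (k : ℕ) (g : ℝ → ℝ), ContDiff ℝ ∞ g → ∀ (r0 M : ℝ),
    (∀ j < k, iteratedDeriv j g 0 = 0) →
    (∀ s ∈ Set.Icc (0:ℝ) r0, |iteratedDeriv k g s - iteratedDeriv k g 0| ≤ M) →
    ∀ r ∈ Set.Icc (0:ℝ) r0,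
      |g r - iteratedDeriv k g 0 * r ^ k / (Nat.factorial k)| ≤ M * r ^ k := by
  intro k
  induction k with
  | zero =>
    intro g hg r0 M h0 hM r hr
    simpa [iteratedDeriv_zero] using hM r hr
  | succ k IH =>
    intro g hg r0 M h0 hM r hr
    have hr0 : (0:ℝ) ≤ r0 := hr.1.trans hr.2
    have hg' : ContDiff ℝ ∞ (deriv g) := (contDiff_infty_iff_deriv.mp hg).2
    have hM0 : 0 ≤ M := le_trans (abs_nonneg _) (hM 0 ⟨le_refl _, hr0⟩)
    set c := iteratedDeriv (k+1) g 0 with hc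
    have h0' : ∀ j < k, iteratedDeriv j (deriv g) 0 = 0 := by
      intro j hj
      rw [← iteratedDeriv_succ']
      exact h0 (j+1) (by omega)
    have hM' : ∀ s ∈ Set.Icc (0:ℝ) r0,
        |iteratedDeriv k (deriv g) s - iteratedDeriv k (deriv g) 0| ≤ M := by
      intro s hs
      rw [← iteratedDeriv_succ']
      exact hM s hs
    have hcg : iteratedDeriv k (deriv g) 0 = c := by rw [← iteratedDeriv_succ']
    have IH' := IH (deriv g) hg' r0 M h0' hM'
    have hg0 : g 0 = 0 := by
      have := h0 0 (Nat.succ_pos k)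
      simpa [iteratedDeriv_zero] using this
    have hcont : Continuous (deriv g) := hg'.continuous
    have hint1 : IntervalIntegrable (deriv g) volume 0 r := hcont.intervalIntegrable 0 r
    have hint2 : IntervalIntegrable (fun s : ℝ => c * s ^ k / (Nat.factorial k)) volume 0 r :=
      (Continuous.div_const (continuous_const.mul (continuous_pow k)) _).intervalIntegrable 0 r
    have hderiv : ∫ s in (0:ℝ)..r, deriv g s = g r - g 0 :=
      intervalIntegral.integral_deriv_eq_sub
        (fun x _ => (hg.differentiable (by simp)).differentiableAt)
        hint1
    have hpow : ∫ s in (0:ℝ)..r, c * s ^ k / (Nat.factorial k)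
        = c * r ^ (k+1) / (Nat.factorial (k+1)) := by
      have heq : (fun s : ℝ => c * s ^ k / (Nat.factorial k))
          = fun s : ℝ => (c / (Nat.factorial k)) * s ^ k := by
        funext s; ring
      rw [heq, intervalIntegral.integral_const_mul, integral_pow, Nat.factorial_succ]
      have hfk : ((Nat.factorial k : ℝ)) ≠ 0 := by positivity
      have hk1 : ((k:ℝ) + 1) ≠ 0 := by positivity
      push_cast
      rw [zero_pow (Nat.succ_ne_zero k), sub_zero, div_mul_div_comm,
        mul_comm ((Nat.factorial k : ℝ))]
    have key : g r - c * r ^ (k+1) / (Nat.factorial (k+1))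
        = ∫ s in (0:ℝ)..r, (deriv g s - c * s ^ k / (Nat.factorial k)) := by
      rw [intervalIntegral.integral_sub hint1 hint2, hderiv, hg0, hpow]
      ring
    have hbound : ∀ s ∈ Set.uIoc (0:ℝ) r,
        ‖deriv g s - c * s ^ k / (Nat.factorial k)‖ ≤ M * r ^ k := by
      intro s hs
      rw [Set.uIoc_of_le hr.1] at hs
      have hs' : s ∈ Set.Icc (0:ℝ) r0 := ⟨hs.1.le, hs.2.trans hr.2⟩
      have h1 := IH' s hs'
      rw [hcg] at h1
      refine le_trans ?_ (mul_le_mul_of_nonneg_left (pow_le_pow_left₀ hs.1.le hs.2 k) hM0)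
      simpa [Real.norm_eq_abs] using h1
    have hbd := intervalIntegral.norm_integral_le_of_norm_le_const hbound
    rw [← key] at hbd
    have habs : |r - 0| = r := by rw [sub_zero, abs_of_nonneg hr.1]
    rw [habs] at hbd
    calc |g r - c * r ^ (k+1) / (Nat.factorial (k+1))| ≤ M * r ^ k * r := hbd
      _ = M * r ^ (k+1) := by ring

/-- If `g` is smooth and `g r / r^l` has a finite limit as `r → 0⁺`, then all derivatives of `g`
at `0` of order `< l` vanish. -/
lemma lemC (g : ℝ → ℝ) (hg : ContDiff ℝ ∞ g) (l : ℕ) (L : ℝ)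
    (hlim : Tendsto (fun r : ℝ => g r / r ^ l) (nhdsWithin 0 (Set.Ioi 0)) (nhds L)) :
    ∀ k < l, iteratedDeriv k g 0 = 0 := by
  intro k
  induction k using Nat.strong_induction_on with
  | _ k IH =>
    intro hkl
    set c := iteratedDeriv k g 0 with hc
    have h1 : Tendsto (fun r : ℝ => g r / r ^ k) (nhdsWithin 0 (Set.Ioi 0))
        (nhds (c / (Nat.factorial k))) := by
      rw [Metric.tendsto_nhdsWithin_nhds]
      intro ε hε
      have hcont : Continuous (iteratedDeriv k g) :=
        hg.continuous_iteratedDeriv k (by exact_mod_cast le_top)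
      have hce : ContinuousAt (iteratedDeriv k g) 0 := hcont.continuousAt
      rw [Metric.continuousAt_iff] at hce
      obtain ⟨δ, hδpos, hδ⟩ := hce (ε/2) (by positivity)
      refine ⟨δ/2, by positivity, ?_⟩
      intro r hrIoi hrd
      have hrpos : (0:ℝ) < r := hrIoi
      rw [Real.dist_eq, sub_zero, abs_of_pos hrpos] at hrd
      have hMbd : ∀ s ∈ Set.Icc (0:ℝ) r,
          |iteratedDeriv k g s - iteratedDeriv k g 0| ≤ ε/2 := by
        intro s hs
        have hd : dist s 0 < δ := by
          rw [Real.dist_eq, sub_zero, abs_of_nonneg hs.1]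
          linarith [hs.2]
        have := hδ hd
        rw [Real.dist_eq] at this
        exact this.le
      have h0' : ∀ j < k, iteratedDeriv j g 0 = 0 := fun j hj => IH j hj (hj.trans hkl)
      have hD := lemD' k g hg r (ε/2) h0' hMbd r ⟨hrpos.le, le_refl _⟩
      have hrk : (0:ℝ) < r ^ k := pow_pos hrpos k
      rw [Real.dist_eq]
      have heq : g r / r ^ k - c / (Nat.factorial k)
          = (g r - c * r ^ k / (Nat.factorial k)) / r ^ k := by
        have hfk : ((Nat.factorial k : ℝ)) ≠ 0 := by positivity
        field_simp
      rw [heq, abs_div, abs_of_pos hrk, div_lt_iff₀ hrk]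
      have hlt : ε/2 * r ^ k < ε * r ^ k := by nlinarith
      exact lt_of_le_of_lt hD hlt
    have h2 : Tendsto (fun r : ℝ => g r / r ^ k) (nhdsWithin 0 (Set.Ioi 0)) (nhds 0) := by
      have hpow : Tendsto (fun r : ℝ => r ^ (l - k)) (nhdsWithin 0 (Set.Ioi 0)) (nhds 0) := by
        have h := (continuous_pow (l-k)).tendsto (0:ℝ)
        rw [zero_pow (by omega : l - k ≠ 0)] at h
        exact h.mono_left nhdsWithin_le_nhds
      have hm := hlim.mul hpow
      rw [mul_zero] at hm
      refine hm.congr' ?_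
      filter_upwards [self_mem_nhdsWithin] with r hr
      have hrpos : (0:ℝ) < r := hr
      have hrne : r ≠ 0 := hrpos.ne'
      have hrl : r ^ l = r ^ k * r ^ (l - k) := by rw [← pow_add]; congr 1; omega
      rw [hrl]
      field_simp
    have huniq := tendsto_nhds_unique h1 h2
    have hfk : ((Nat.factorial k : ℝ)) ≠ 0 := by positivity
    exact (div_eq_zero_iff.mp huniq).resolve_right hfk

/-- Partial derivative in the first coordinate. -/
noncomputable def pd (G : ℝ × ℝ → ℝ) : ℝ × ℝ → ℝ := fun p => fderiv ℝ G p (1, 0)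

lemma pd_contDiff {G : ℝ × ℝ → ℝ} (hG : ContDiff ℝ ∞ G) : ContDiff ℝ ∞ (pd G) :=
  (hG.fderiv_right (le_refl _)).clm_apply contDiff_const

lemma pd_iter_contDiff {G : ℝ × ℝ → ℝ} (hG : ContDiff ℝ ∞ G) :
    ∀ k, ContDiff ℝ ∞ (pd^[k] G) := by
  intro k
  induction k generalizing G with
  | zero => exact hG
  | succ k IH =>
    rw [Function.iterate_succ_apply]
    exact IH (pd_contDiff hG)

lemma pd_deriv {G : ℝ × ℝ → ℝ} (hG : ContDiff ℝ ∞ G) (θ : ℝ) :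
    deriv (fun s => G (s, θ)) = fun r => pd G (r, θ) := by
  funext r
  have h1 : HasDerivAt (fun s : ℝ => (s, θ)) ((1:ℝ), (0:ℝ)) r :=
    (hasDerivAt_id r).prodMk (hasDerivAt_const r θ)
  have h2 : HasFDerivAt G (fderiv ℝ G (r, θ)) (r, θ) :=
    (hG.differentiable (by simp) (r, θ)).hasFDerivAt
  exact (h2.comp_hasDerivAt r h1).deriv

lemma pd_iteratedDeriv : ∀ (k : ℕ) (G : ℝ × ℝ → ℝ), ContDiff ℝ ∞ G → ∀ (θ r : ℝ),
    iteratedDeriv k (fun s => G (s, θ)) r = pd^[k] G (r, θ) := by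
  intro k
  induction k with
  | zero => intro G hG θ r; simp [iteratedDeriv_zero]
  | succ k IH =>
    intro G hG θ r
    rw [iteratedDeriv_succ', pd_deriv hG θ, Function.iterate_succ_apply]
    exact IH (pd G) (pd_contDiff hG) θ r

theorem stmt_11 (n : ℕ) (a : Fin n → ℕ) (ha : ∀ i, 1 ≤ a i) (l : ℕ)
    (F : (Fin n → ℂ) → ℝ) (hsmooth : ContDiff ℝ (⊤ : ℕ∞) F)
    (ε : ℝ) (hε : 0 < ε)
    (hpsh : ∀ z w : Fin n → ℂ, ∀ ρ : ℝ,
      (∀ θ : ℝ, (fun i => z i + ((ρ : ℂ) * Complex.exp ((θ : ℂ) * Complex.I)) * w i) ∈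
        Metric.ball (0 : Fin n → ℂ) ε) →
      F z ≤ (1 / (2 * Real.pi)) *
        ∫ θ in (0:ℝ)..(2 * Real.pi),
          F (fun i => z i + ((ρ : ℂ) * Complex.exp ((θ : ℂ) * Complex.I)) * w i))
    (P : (Fin n → ℂ) → ℝ)
    (D : Finset ((Fin n → ℕ) × (Fin n → ℕ)))
    (C : (Fin n → ℕ) × (Fin n → ℕ) → ℂ)
    (hD : ∀ p ∈ D, ∑ i, a i * (p.1 i + p.2 i) = l)
    (hPpoly : ∀ z : Fin n → ℂ, (P z : ℂ) =
      ∑ p ∈ D, C p * (∏ i, (z i) ^ (p.1 i)) * (∏ i, (conj (z i)) ^ (p.2 i)))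
    (hlim : ∀ z : Fin n → ℂ,
      Tendsto (fun r : ℝ => F (fun i => ((r : ℂ)) ^ (a i) * z i) / r ^ l)
        (nhdsWithin 0 (Set.Ioi 0)) (nhds (P z))) :
    ∀ z w : Fin n → ℂ, ∀ ρ : ℝ,
      P z ≤ (1 / (2 * Real.pi)) *
        ∫ θ in (0:ℝ)..(2 * Real.pi),
          P (fun i => z i + ((ρ : ℂ) * Complex.exp ((θ : ℂ) * Complex.I)) * w i) := by
  intro z w ρ
  have hF : ContDiff ℝ ∞ F := hsmooth.of_le (by simp)
  -- the circle map and the scaled family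
  set ζ : ℝ → Fin n → ℂ :=
    fun θ i => z i + ((ρ : ℂ) * Complex.exp ((θ : ℂ) * Complex.I)) * w i with hζ
  set G : ℝ × ℝ → ℝ := fun p => F (fun i => ((p.1 : ℂ)) ^ (a i) * ζ p.2 i) with hGdef
  -- smoothness of G
  have hinner : ContDiff ℝ ∞ (fun p : ℝ × ℝ => (fun i => ((p.1 : ℂ)) ^ (a i) * ζ p.2 i)) := by
    rw [contDiff_pi]
    intro i
    have h1 : ContDiff ℝ ∞ (fun p : ℝ × ℝ => ((p.1 : ℂ))) :=
      Complex.ofRealCLM.contDiff.comp contDiff_fst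
    have h2 : ContDiff ℝ ∞ (fun p : ℝ × ℝ => ((p.1 : ℂ)) ^ (a i)) := h1.pow (a i)
    have h3 : ContDiff ℝ ∞ (fun p : ℝ × ℝ => ((p.2 : ℂ))) :=
      Complex.ofRealCLM.contDiff.comp contDiff_snd
    have h4 : ContDiff ℝ ∞ (fun p : ℝ × ℝ => ζ p.2 i) := by
      simp only [hζ]
      exact contDiff_const.add
        (((contDiff_const.mul ((h3.mul contDiff_const).cexp)).mul contDiff_const))
    exact h2.mul h4
  have hG : ContDiff ℝ ∞ G := hF.comp hinner
  -- uniform bound on the l-th partial derivative over a compact set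
  have hKcomp : IsCompact ((Set.Icc (0:ℝ) 1) ×ˢ (Set.Icc (0:ℝ) (2 * Real.pi))) :=
    isCompact_Icc.prod isCompact_Icc
  have hGlcont : Continuous (pd^[l] G) := (pd_iter_contDiff hG l).continuous
  obtain ⟨M0, hM0⟩ := hKcomp.exists_bound_of_continuousOn hGlcont.continuousOn
  have hM0nn : 0 ≤ M0 := by
    have := hM0 (0, 0) (by constructor <;> constructor <;> simp [Real.pi_nonneg, Real.pi_pos.le])
    exact le_trans (norm_nonneg _) this
  -- derivative vanishing and Taylor bound for each θ
  have hzero : ∀ θ : ℝ, ∀ k < l, iteratedDeriv k (fun s => G (s, θ)) 0 = 0 := by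
    intro θ
    refine lemC _ (hG.comp ((contDiff_id (E := ℝ)).prodMk contDiff_const)) l (P (ζ θ)) ?_
    exact hlim (ζ θ)
  have hGθ : ∀ θ : ℝ, ContDiff ℝ ∞ (fun s => G (s, θ)) := fun θ =>
    hG.comp ((contDiff_id (E := ℝ)).prodMk contDiff_const)
  have hbd : ∀ θ ∈ Set.Icc (0:ℝ) (2 * Real.pi), ∀ r ∈ Set.Ioc (0:ℝ) 1,
      |G (r, θ)| ≤ 3 * M0 * r ^ l := by
    intro θ hθ r hr
    have hc0 : |pd^[l] G (0, θ)| ≤ M0 := by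
      have := hM0 (0, θ) ⟨⟨le_refl _, zero_le_one⟩, hθ⟩
      simpa [Real.norm_eq_abs] using this
    have hosc : ∀ s ∈ Set.Icc (0:ℝ) 1,
        |iteratedDeriv l (fun s => G (s, θ)) s - iteratedDeriv l (fun s => G (s, θ)) 0|
          ≤ 2 * M0 := by
      intro s hs
      rw [pd_iteratedDeriv l G hG θ s, pd_iteratedDeriv l G hG θ 0]
      have h1 : |pd^[l] G (s, θ)| ≤ M0 := by
        have := hM0 (s, θ) ⟨hs, hθ⟩
        simpa [Real.norm_eq_abs] using this
      calc |pd^[l] G (s, θ) - pd^[l] G (0, θ)|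
          ≤ |pd^[l] G (s, θ)| + |pd^[l] G (0, θ)| := abs_sub _ _
        _ ≤ 2 * M0 := by linarith
    have hD := lemD' l (fun s => G (s, θ)) (hGθ θ) 1 (2 * M0) (hzero θ) hosc r
      ⟨hr.1.le, hr.2⟩
    have hcval : iteratedDeriv l (fun s => G (s, θ)) 0 = pd^[l] G (0, θ) :=
      pd_iteratedDeriv l G hG θ 0
    rw [hcval] at hD
    have hfl : (1:ℝ) ≤ (Nat.factorial l : ℝ) := Nat.one_le_cast.mpr (Nat.factorial_pos l)
    have hrl : (0:ℝ) ≤ r ^ l := pow_nonneg hr.1.le l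
    have hsecond : |pd^[l] G (0, θ) * r ^ l / (Nat.factorial l)| ≤ M0 * r ^ l := by
      rw [abs_div, abs_mul, abs_of_nonneg hrl, abs_of_pos
        (by exact_mod_cast Nat.factorial_pos l : (0:ℝ) < (Nat.factorial l : ℝ))]
      exact (div_le_self (by positivity) hfl).trans (mul_le_mul_of_nonneg_right hc0 hrl)
    have hD' : |G (r, θ) - pd^[l] G (0, θ) * r ^ l / (Nat.factorial l)| ≤ 2 * M0 * r ^ l := hD
    calc |G (r, θ)| = |(G (r, θ) - pd^[l] G (0, θ) * r ^ l / (Nat.factorial l))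
            + pd^[l] G (0, θ) * r ^ l / (Nat.factorial l)| := by congr 1; ring
      _ ≤ |G (r, θ) - pd^[l] G (0, θ) * r ^ l / (Nat.factorial l)|
            + |pd^[l] G (0, θ) * r ^ l / (Nat.factorial l)| := abs_add_le _ _
      _ ≤ 2 * M0 * r ^ l + M0 * r ^ l := add_le_add hD' hsecond
      _ = 3 * M0 * r ^ l := by ring
  -- convergence of the integrals by dominated convergence
  have hcontθ : ∀ r : ℝ, Continuous (fun θ => G (r, θ)) := fun r =>
    hG.continuous.comp (continuous_const.prodMk continuous_id)
  have hT2 : Tendsto (fun r : ℝ => ∫ θ in (0:ℝ)..(2 * Real.pi), G (r, θ) / r ^ l)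
      (nhdsWithin 0 (Set.Ioi 0))
      (nhds (∫ θ in (0:ℝ)..(2 * Real.pi), P (ζ θ))) := by
    apply intervalIntegral.tendsto_integral_filter_of_dominated_convergence
      (fun _ => 3 * M0)
    · exact Eventually.of_forall fun r =>
        ((hcontθ r).div_const _).aestronglyMeasurable
    · have hmem : Set.Ioc (0:ℝ) 1 ∈ nhdsWithin 0 (Set.Ioi 0) :=
        Ioc_mem_nhdsGT_of_mem ⟨le_refl _, one_pos⟩
      filter_upwards [hmem] with r hr
      apply ae_of_all
      intro θ hθ
      have hθ' : θ ∈ Set.Icc (0:ℝ) (2 * Real.pi) := by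
        rw [Set.uIoc_of_le Real.two_pi_pos.le] at hθ
        exact ⟨hθ.1.le, hθ.2⟩
      have hb := hbd θ hθ' r hr
      have hrl : (0:ℝ) < r ^ l := pow_pos hr.1 l
      rw [Real.norm_eq_abs, abs_div, abs_of_pos hrl, div_le_iff₀ hrl]
      calc |G (r, θ)| ≤ 3 * M0 * r ^ l := hb
        _ = 3 * M0 * r ^ l := rfl
    · exact intervalIntegrable_const
    · apply ae_of_all
      intro θ _
      exact hlim (ζ θ)
  have hT1 : Tendsto (fun r : ℝ => F (fun i => ((r : ℂ)) ^ (a i) * z i) / r ^ l)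
      (nhdsWithin 0 (Set.Ioi 0)) (nhds (P z)) := hlim z
  -- the eventual inequality
  have hB : (0:ℝ) < ‖z‖ + |ρ| * ‖w‖ + 1 := by positivity
  set B : ℝ := ‖z‖ + |ρ| * ‖w‖ + 1 with hBdef
  have hineq : ∀ᶠ r : ℝ in nhdsWithin 0 (Set.Ioi 0),
      F (fun i => ((r : ℂ)) ^ (a i) * z i) / r ^ l
        ≤ (1 / (2 * Real.pi)) * ∫ θ in (0:ℝ)..(2 * Real.pi), G (r, θ) / r ^ l := by
    have hmem : Set.Ioo (0:ℝ) (min 1 (ε / B)) ∈ nhdsWithin 0 (Set.Ioi 0) :=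
      Ioo_mem_nhdsGT_of_mem ⟨le_refl _, lt_min one_pos (by positivity)⟩
    filter_upwards [hmem] with r hr
    have hrpos : (0:ℝ) < r := hr.1
    have hr1 : r ≤ 1 := le_of_lt (lt_of_lt_of_le hr.2 (min_le_left _ _))
    have hrε : r < ε / B := lt_of_lt_of_le hr.2 (min_le_right _ _)
    -- the circles fit in the ball
    have hball : ∀ θ : ℝ,
        (fun i => (fun i => ((r : ℂ)) ^ (a i) * z i) i +
          ((ρ : ℂ) * Complex.exp ((θ : ℂ) * Complex.I)) * ((fun i => ((r : ℂ)) ^ (a i) * w i) i))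
          ∈ Metric.ball (0 : Fin n → ℂ) ε := by
      intro θ
      rw [mem_ball_zero_iff, pi_norm_lt_iff hε]
      intro i
      have heq : ((r : ℂ)) ^ (a i) * z i +
          ((ρ : ℂ) * Complex.exp ((θ : ℂ) * Complex.I)) * (((r : ℂ)) ^ (a i) * w i)
          = ((r : ℂ)) ^ (a i) * ζ θ i := by
        simp only [hζ]; ring
      rw [heq]
      have h1 : ‖((r : ℂ)) ^ (a i)‖ = r ^ (a i) := by
        rw [norm_pow, Complex.norm_real, Real.norm_eq_abs, abs_of_pos hrpos]
      have h2 : ‖ζ θ i‖ ≤ ‖z‖ + |ρ| * ‖w‖ := by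
        simp only [hζ]
        calc ‖z i + ((ρ : ℂ) * Complex.exp ((θ : ℂ) * Complex.I)) * w i‖
            ≤ ‖z i‖ + ‖((ρ : ℂ) * Complex.exp ((θ : ℂ) * Complex.I)) * w i‖ := norm_add_le _ _
          _ = ‖z i‖ + ‖(ρ : ℂ)‖ * ‖Complex.exp ((θ : ℂ) * Complex.I)‖ * ‖w i‖ := by
              rw [norm_mul, norm_mul]
          _ = ‖z i‖ + |ρ| * ‖w i‖ := by
              rw [Complex.norm_real, Real.norm_eq_abs]
              have : ‖Complex.exp ((θ : ℂ) * Complex.I)‖ = 1 := by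
                exact Complex.norm_exp_ofReal_mul_I θ
              rw [this, mul_one]
          _ ≤ ‖z‖ + |ρ| * ‖w i‖ := by
              have := norm_le_pi_norm z i
              linarith
          _ ≤ ‖z‖ + |ρ| * ‖w‖ := by
              have := norm_le_pi_norm w i
              have habs : (0:ℝ) ≤ |ρ| := abs_nonneg _
              nlinarith
      rw [norm_mul, h1]
      have h3 : r ^ (a i) ≤ r := by
        calc r ^ (a i) ≤ r ^ 1 := pow_le_pow_of_le_one hrpos.le hr1 (ha i)
          _ = r := pow_one r
      have h4 : ‖ζ θ i‖ ≤ B := by rw [hBdef]; linarith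
      calc r ^ (a i) * ‖ζ θ i‖ ≤ r * B := by
            apply mul_le_mul h3 h4 (norm_nonneg _) hrpos.le
        _ < (ε / B) * B := by
            apply mul_lt_mul_of_pos_right hrε hB
        _ = ε := by field_simp
    have hps := hpsh (fun i => ((r : ℂ)) ^ (a i) * z i) (fun i => ((r : ℂ)) ^ (a i) * w i)
      ρ hball
    -- rewrite the integrand as G (r, θ)
    have hfun : (fun θ : ℝ => F (fun i => (fun i => ((r : ℂ)) ^ (a i) * z i) i +
        ((ρ : ℂ) * Complex.exp ((θ : ℂ) * Complex.I)) * ((fun i => ((r : ℂ)) ^ (a i) * w i) i)))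
        = fun θ => G (r, θ) := by
      funext θ
      simp only [hGdef, hζ]
      congr 1
      funext i
      ring
    rw [hfun] at hps
    have hrl : (0:ℝ) < r ^ l := pow_pos hrpos l
    have hdiv := div_le_div_of_nonneg_right hps hrl.le
    calc F (fun i => ((r : ℂ)) ^ (a i) * z i) / r ^ l
        ≤ ((1 / (2 * Real.pi)) * ∫ θ in (0:ℝ)..(2 * Real.pi), G (r, θ)) / r ^ l := hdiv
      _ = (1 / (2 * Real.pi)) * ∫ θ in (0:ℝ)..(2 * Real.pi), G (r, θ) / r ^ l := by
          rw [mul_div_assoc, intervalIntegral.integral_div]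
  -- conclude
  have hT2' : Tendsto (fun r : ℝ =>
      (1 / (2 * Real.pi)) * ∫ θ in (0:ℝ)..(2 * Real.pi), G (r, θ) / r ^ l)
      (nhdsWithin 0 (Set.Ioi 0))
      (nhds ((1 / (2 * Real.pi)) * ∫ θ in (0:ℝ)..(2 * Real.pi), P (ζ θ))) :=
    hT2.const_mul _
  exact le_of_tendsto_of_tendsto hT1 hT2' hineq
end

section
/- Let F(z) = Σ_α C_α z^α be a holomorphic polynomial on ℂ^n whose Newton polyhedron N₊(F) has a bounded face κ of positive dimension determined by a vector a ∈ ℕ^n, i.e. κ lies on the hyperplane {⟨a,ξ⟩ = l} and contains at least two monomials of F. Then the κ-part F_κ(z) = Σ_{⟨a,α⟩=l} C_α z^α vanishes at some point c ∈ (ℂ*)^n, and hence F_κ(c_1 t^{a_1}, …, c_n t^{a_n}) = t^l F_κ(c) = 0 for all t ∈ ℂ. -/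
open Finset

private lemma digits_inj (B : ℕ) : ∀ {n : ℕ} (f g : Fin n → ℕ), (∀ i, f i < B) →
    (∀ i, g i < B) →
    ∑ i, f i * B ^ (i : ℕ) = ∑ i, g i * B ^ (i : ℕ) → f = g := by
  intro n
  induction n with
  | zero => intro f g _ _ _; funext i; exact i.elim0
  | succ n ih =>
    intro f g hf hg h
    have hB0 : 0 < B := lt_of_le_of_lt (Nat.zero_le _) (hf 0)
    rw [Fin.sum_univ_succ, Fin.sum_univ_succ] at h
    simp only [Fin.val_succ, Fin.val_zero, pow_succ, pow_zero, mul_one] at h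
    have hre : ∀ (f : Fin (n+1) → ℕ), ∑ i : Fin n, f i.succ * (B ^ (i:ℕ) * B)
        = (∑ i : Fin n, f i.succ * B ^ (i:ℕ)) * B := by
      intro f; rw [Finset.sum_mul]
      exact Finset.sum_congr rfl fun i _ => (mul_assoc _ _ _).symm
    rw [hre f, hre g] at h
    set S1 := ∑ i : Fin n, f i.succ * B ^ (i:ℕ) with hS1
    set S2 := ∑ i : Fin n, g i.succ * B ^ (i:ℕ) with hS2
    have h0 : f 0 = g 0 := by
      have e1 : (f 0 + S1 * B) % B = f 0 := by
        rw [Nat.add_mul_mod_self_right, Nat.mod_eq_of_lt (hf 0)]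
      have e2 : (g 0 + S2 * B) % B = g 0 := by
        rw [Nat.add_mul_mod_self_right, Nat.mod_eq_of_lt (hg 0)]
      rw [← e1, ← e2, h]
    have hS : S1 = S2 := by
      have hmul : S1 * B = S2 * B := by omega
      exact Nat.eq_of_mul_eq_mul_right hB0 hmul
    have htail := ih (fun i => f i.succ) (fun i => g i.succ)
      (fun i => hf i.succ) (fun i => hg i.succ) hS
    funext i
    refine Fin.cases h0 (fun j => ?_) i
    exact congrFun htail j

theorem stmt_16 (n : ℕ) (A : Finset (Fin n → ℕ)) (C : (Fin n → ℕ) → ℂ)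
    (hC : ∀ α ∈ A, C α ≠ 0) (hcard : 2 ≤ A.card)
    (a : Fin n → ℕ) (ha : ∀ i, 1 ≤ a i) (l : ℕ)
    (hA : ∀ α ∈ A, ∑ i, a i * α i = l) :
    ∃ c : Fin n → ℂ, (∀ i, c i ≠ 0) ∧
      (∑ α ∈ A, C α * ∏ i, (c i) ^ (α i)) = 0 ∧
      ∀ t : ℂ, (∑ α ∈ A, C α * ∏ i, (c i * t ^ (a i)) ^ (α i)) = 0 := by
  classical
  set B : ℕ := 1 + A.sup (fun α => Finset.univ.sup α) with hBdef
  have hB : ∀ α ∈ A, ∀ i, α i < B := by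
    intro α hα i
    have h1 : α i ≤ Finset.univ.sup α := Finset.le_sup (Finset.mem_univ i)
    have h2 : Finset.univ.sup α ≤ A.sup (fun α => Finset.univ.sup α) := Finset.le_sup hα
    omega
  set w : (Fin n → ℕ) → ℕ := fun α => ∑ i, α i * B ^ (i : ℕ) with hwdef
  have hw_inj : ∀ α ∈ A, ∀ β ∈ A, w α = w β → α = β := fun α hα β hβ h =>
    digits_inj B α β (hB α hα) (hB β hβ) h
  have hAne : A.Nonempty := Finset.card_pos.mp (by omega)
  set m : ℕ := (A.image w).min' (hAne.image w) with hmdef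
  obtain ⟨αm, hαm, hwαm⟩ := Finset.mem_image.mp ((A.image w).min'_mem (hAne.image w))
  have hwm : w αm = m := hwαm
  have hmin : ∀ α ∈ A, m ≤ w α := fun α hα =>
    Finset.min'_le _ _ (Finset.mem_image_of_mem w hα)
  obtain ⟨α₀, hα₀, β₀, hβ₀, hne⟩ := Finset.one_lt_card.mp hcard
  have hex : ∃ β ∈ A, m < w β := by
    by_cases h : w α₀ = m
    · refine ⟨β₀, hβ₀, lt_of_le_of_ne (hmin β₀ hβ₀) ?_⟩
      intro hc
      exact hne (hw_inj α₀ hα₀ β₀ hβ₀ (by rw [h, hc]))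
    · exact ⟨α₀, hα₀, lt_of_le_of_ne (hmin α₀ hα₀) (fun hc => h hc.symm)⟩
  obtain ⟨β, hβ, hmβ⟩ := hex
  set q : Polynomial ℂ := ∑ α ∈ A, Polynomial.C (C α) * Polynomial.X ^ (w α - m) with hqdef
  have hcoeff : ∀ k, q.coeff k = ∑ α ∈ A, if w α - m = k then C α else 0 := by
    intro k
    rw [hqdef, Polynomial.finset_sum_coeff]
    refine Finset.sum_congr rfl fun α _ => ?_
    rw [Polynomial.coeff_C_mul, Polynomial.coeff_X_pow]
    simp [mul_ite, eq_comm]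
  have h0coeff : q.coeff 0 = C αm := by
    rw [hcoeff]
    rw [Finset.sum_eq_single αm]
    · rw [if_pos (by omega)]
    · intro b hb hbne
      rw [if_neg]
      intro hc
      have hble := hmin b hb
      have hbw : w b = w αm := by omega
      exact hbne (hw_inj b hb αm hαm hbw)
    · intro hc; exact absurd hαm hc
  have hdcoeff : q.coeff (w β - m) = C β := by
    rw [hcoeff]
    rw [Finset.sum_eq_single β]
    · rw [if_pos rfl]
    · intro b hb hbne
      rw [if_neg]
      intro hc
      have hble : m ≤ w b := hmin b hb
      have : w b = w β := by omega
      exact hbne (hw_inj b hb β hβ this)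
    · intro hc; exact absurd hβ hc
  have hdeg : 0 < q.degree := by
    have hle : ((w β - m : ℕ) : WithBot ℕ) ≤ q.degree :=
      Polynomial.le_degree_of_ne_zero (by rw [hdcoeff]; exact hC β hβ)
    refine lt_of_lt_of_le ?_ hle
    have hpos : 0 < w β - m := by omega
    exact_mod_cast hpos
  obtain ⟨z, hz⟩ := Complex.exists_root hdeg
  have hz0 : z ≠ 0 := by
    intro h
    subst h
    have h1 : q.coeff 0 = 0 := by
      rw [Polynomial.coeff_zero_eq_eval_zero]; exact hz
    rw [h0coeff] at h1
    exact hC αm hαm h1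
  have heval : ∑ α ∈ A, C α * z ^ (w α - m) = 0 := by
    have h := hz
    simp only [Polynomial.IsRoot, hqdef, Polynomial.eval_finset_sum, Polynomial.eval_mul,
      Polynomial.eval_C, Polynomial.eval_pow, Polynomial.eval_X] at h
    exact h
  have hprod : ∀ α : Fin n → ℕ, (∏ i : Fin n, (z ^ B ^ i.val) ^ α i) = z ^ w α := by
    intro α
    rw [hwdef]
    calc ∏ i : Fin n, (z ^ B ^ i.val) ^ α i = ∏ i : Fin n, z ^ (α i * B ^ i.val) :=
          Finset.prod_congr rfl fun i _ => by rw [← pow_mul, mul_comm]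
      _ = z ^ ∑ i : Fin n, α i * B ^ i.val := Finset.prod_pow_eq_pow_sum univ (fun i => α i * B ^ i.val) z
  have hfirst : ∑ α ∈ A, C α * ∏ i : Fin n, (z ^ B ^ i.val) ^ α i = 0 := by
    calc ∑ α ∈ A, C α * ∏ i : Fin n, (z ^ B ^ i.val) ^ α i
        = ∑ α ∈ A, z ^ m * (C α * z ^ (w α - m)) := by
          refine Finset.sum_congr rfl fun α hα => ?_
          rw [hprod α, ← Nat.add_sub_cancel' (hmin α hα), pow_add]
          ring_nf
          rw [Nat.add_sub_cancel' (hmin α hα)]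
      _ = z ^ m * ∑ α ∈ A, C α * z ^ (w α - m) := (Finset.mul_sum _ _ _).symm
      _ = 0 := by rw [heval, mul_zero]
  refine ⟨fun i => z ^ B ^ (i : ℕ), fun i => pow_ne_zero _ hz0, hfirst, ?_⟩
  intro t
  have hprod2 : ∀ α ∈ A, (∏ i : Fin n, ((z ^ B ^ i.val) * t ^ a i) ^ α i)
      = (∏ i : Fin n, (z ^ B ^ i.val) ^ α i) * t ^ l := by
    intro α hα
    rw [← hA α hα]
    rw [show (∏ i : Fin n, ((z ^ B ^ i.val) * t ^ a i) ^ α i)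
        = (∏ i : Fin n, (z ^ B ^ i.val) ^ α i) * ∏ i : Fin n, (t ^ a i) ^ α i from by
      rw [← Finset.prod_mul_distrib]
      exact Finset.prod_congr rfl fun i _ => mul_pow _ _ _]
    congr 1
    calc ∏ i : Fin n, (t ^ a i) ^ α i = ∏ i : Fin n, t ^ (a i * α i) :=
          Finset.prod_congr rfl fun i _ => by rw [← pow_mul]
      _ = t ^ ∑ i, a i * α i := Finset.prod_pow_eq_pow_sum univ _ t
  calc ∑ α ∈ A, C α * ∏ i : Fin n, ((z ^ B ^ i.val) * t ^ a i) ^ α i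
      = ∑ α ∈ A, (C α * ∏ i : Fin n, (z ^ B ^ i.val) ^ α i) * t ^ l := by
        refine Finset.sum_congr rfl fun α hα => ?_
        rw [hprod2 α hα]; ring
    _ = (∑ α ∈ A, C α * ∏ i : Fin n, (z ^ B ^ i.val) ^ α i) * t ^ l := (Finset.sum_mul _ _ _).symm
    _ = 0 := by rw [hfirst, zero_mul]
end

section
/- Let Q(z) = Σ_{α ∈ A} C_α z^α be a holomorphic polynomial on ℂ^n with all C_α ≠ 0, where A ⊆ ℕ₀^n is finite with |A| ≥ 2 and all α ∈ A lie on a common hyperplane {⟨a, ξ⟩ = l} for some a ∈ ℕ^n, l ∈ ℕ. Then Q has a zero in (ℂ*)^n. -/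
/-!
Kronecker substitution `z i = t ^ N ^ i`, with `N` larger than every exponent occurring in `A`,
sends distinct monomials to distinct powers of `t` (base-`N` expansions are unique). The resulting
one-variable polynomial has at least two nonzero coefficients, so it is not of the form `c * X ^ d`;
over an algebraically closed field it therefore has a nonzero root.
-/

open Polynomial Finset

theorem Polynomial.exists_isRoot_ne_zero_of_coeff_ne_zero {K : Type*} [Field K] [IsAlgClosed K]
    {p : K[X]} {i j : ℕ} (hij : i ≠ j) (hi : p.coeff i ≠ 0) (hj : p.coeff j ≠ 0) :
    ∃ t ≠ 0, p.IsRoot t := by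
  by_contra! h
  have hroots : p.roots = Multiset.replicate p.natDegree 0 := by
    rw [← IsAlgClosed.card_roots_eq_natDegree, Multiset.eq_replicate_card]
    exact fun t ht => not_not.mp fun ht0 => h t ht0 (isRoot_of_mem_roots ht)
  have hmonomial : p = C p.leadingCoeff * X ^ p.natDegree := by
    conv_lhs =>
      rw [← C_leadingCoeff_mul_prod_multiset_X_sub_C (p := p) IsAlgClosed.card_roots_eq_natDegree]
    simp [hroots]
  rw [hmonomial, coeff_C_mul_X_pow] at hi hj
  grind

theorem Polynomial.coeff_sum_C_mul_X_pow_of_injOn {R ι : Type*} [Semiring R] {s : Finset ι}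
    {c : ι → R} {e : ι → ℕ} (he : Set.InjOn e s) {i : ι} (hi : i ∈ s) :
    (∑ k ∈ s, C (c k) * X ^ e k).coeff (e i) = c i := by
  rw [finsetSum_coeff, Finset.sum_eq_single_of_mem i hi]
  · simp
  · intro k hk hki
    rw [coeff_C_mul_X_pow, if_neg fun h => hki (he hk hi h.symm)]

theorem exists_ne_zero_sum_mul_pow_eq_zero {K ι : Type*} [Field K] [IsAlgClosed K]
    {s : Finset ι} {c : ι → K} {e : ι → ℕ} (he : Set.InjOn e s) (hc : ∀ i ∈ s, c i ≠ 0)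
    (hs : 1 < #s) : ∃ t ≠ 0, ∑ i ∈ s, c i * t ^ e i = 0 := by
  obtain ⟨i, hi, j, hj, hij⟩ := one_lt_card.mp hs
  obtain ⟨t, ht, hroot⟩ := exists_isRoot_ne_zero_of_coeff_ne_zero (p := ∑ k ∈ s, C (c k) * X ^ e k)
    (fun h => hij (he hi hj h)) (by rw [coeff_sum_C_mul_X_pow_of_injOn he hi]; exact hc i hi)
    (by rw [coeff_sum_C_mul_X_pow_of_injOn he hj]; exact hc j hj)
  refine ⟨t, ht, ?_⟩
  simpa [IsRoot, eval_finsetSum] using hroot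

theorem injOn_sum_mul_pow (n N : ℕ) :
    Set.InjOn (fun α : Fin n → ℕ => ∑ i, α i * N ^ (i : ℕ)) {α | ∀ i, α i < N} := by
  intro α hα β hβ h
  have hdigits : (fun i => (⟨α i, hα i⟩ : Fin N)) = fun i => ⟨β i, hβ i⟩ :=
    finFunctionFinEquiv.injective (Fin.ext (by simpa [finFunctionFinEquiv_apply] using h))
  funext i
  exact congrArg Fin.val (congrFun hdigits i)

theorem stmt_17_general (n : ℕ) (A : Finset (Fin n → ℕ)) (C : (Fin n → ℕ) → ℂ)
    (hC : ∀ α ∈ A, C α ≠ 0) (hcard : 2 ≤ A.card) :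
    ∃ z : Fin n → ℂ, (∀ i, z i ≠ 0) ∧
      (∑ α ∈ A, C α * ∏ i, (z i) ^ (α i)) = 0 := by
  set N := A.sup (fun α => univ.sup α) + 1
  have hN : ∀ α ∈ A, ∀ i, α i < N := fun α hα i =>
    Nat.lt_succ_of_le ((le_sup (mem_univ i)).trans (le_sup (f := fun α => univ.sup α) hα))
  obtain ⟨t, ht, hsum⟩ := exists_ne_zero_sum_mul_pow_eq_zero (c := C)
    ((injOn_sum_mul_pow n N).mono hN) hC hcard
  refine ⟨fun i => t ^ N ^ (i : ℕ), fun i => pow_ne_zero _ ht, ?_⟩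
  simpa [← pow_mul, prod_pow_eq_pow_sum, mul_comm] using hsum

theorem stmt_17 (n : ℕ) (A : Finset (Fin n → ℕ)) (C : (Fin n → ℕ) → ℂ)
    (hC : ∀ α ∈ A, C α ≠ 0) (hcard : 2 ≤ A.card)
    (a : Fin n → ℕ) (ha : ∀ i, 1 ≤ a i) (l : ℕ)
    (hA : ∀ α ∈ A, ∑ i, a i * α i = l) :
    ∃ z : Fin n → ℂ, (∀ i, z i ≠ 0) ∧
      (∑ α ∈ A, C α * ∏ i, (z i) ^ (α i)) = 0 :=
  stmt_17_general n A C hC hcard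
end

section
/- Let F, h : ℂ^n → ℂ be polynomials in z, z̄ (formal statement for Taylor series of smooth germs) with h(0) ≠ 0 and F(0) = 0. Then the Newton polyhedra agree: N₊(hF) = N₊(F), where N₊(G) = conv(⋃_{ξ ∈ S(G)}(ξ + ℝ≥0^n)) and S(G) is the set of exponents α+β with nonzero coefficient in G. -/
/-!
Every exponent of `h * F` lies above an exponent of `F`. Conversely, below any exponent of `F`
sits a minimal one `e`; at `e` the only surviving term of the convolution is
`coeff 0 h * coeff e F ≠ 0`, so `e` is an exponent of `h * F`. The two supports therefore
generate the same upward-closed set, hence the same convex hull.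
-/

/-- The Newton polyhedron of a polynomial in `z` and `z̄`, represented as a polynomial in
`2n` variables (the first `n` for `z`, the last `n` for `z̄`): the convex hull of the union
of the sets `(α + β) + ℝ≥0ⁿ` over the exponents `(α, β)` in the support. -/
def NewtonPolyhedron (n : ℕ) (G : MvPolynomial (Fin n ⊕ Fin n) ℂ) : Set (Fin n → ℝ) :=
  convexHull ℝ {ξ : Fin n → ℝ | ∃ d ∈ G.support,
    ∀ i, ((d (Sum.inl i) + d (Sum.inr i) : ℕ) : ℝ) ≤ ξ i}

namespace MvPolynomial

variable {σ R : Type*} [CommSemiring R]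

theorem exists_mem_support_le_of_mem_support_mul {p q : MvPolynomial σ R} {d : σ →₀ ℕ}
    (hd : d ∈ (p * q).support) : ∃ e ∈ q.support, e ≤ d := by
  classical
  obtain ⟨a, -, e, he, rfl⟩ := Finset.mem_add.mp (support_mul p q hd)
  exact ⟨e, he, le_add_self⟩

theorem coeff_mul_eq_coeff_zero_mul {p q : MvPolynomial σ R} {e : σ →₀ ℕ}
    (hq : ∀ b < e, coeff b q = 0) : coeff e (p * q) = coeff 0 p * coeff e q := by
  classical
  rw [coeff_mul, Finset.sum_eq_single_of_mem (0, e) (by simp)]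
  rintro ⟨a, b⟩ hab hne
  rw [Finset.HasAntidiagonal.mem_antidiagonal] at hab
  have hb : b < e := by
    refine lt_of_le_of_ne (hab ▸ le_add_self) fun hbe => hne ?_
    subst hbe
    exact Prod.ext (by simpa using hab) rfl
  simp [hq b hb]

theorem exists_mem_support_mul_le [NoZeroDivisors R] {p q : MvPolynomial σ R}
    (hp : coeff 0 p ≠ 0) {d : σ →₀ ℕ} (hd : d ∈ q.support) :
    ∃ e ∈ (p * q).support, e ≤ d := by
  obtain ⟨e, hed, he_min⟩ := exists_minimal_le_of_wellFoundedLT (· ∈ q.support) d hd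
  have hq : ∀ b < e, coeff b q = 0 := fun b hbe =>
    notMem_support_iff.mp fun hb => hbe.not_ge (he_min.2 hb hbe.le)
  refine ⟨e, ?_, hed⟩
  rw [mem_support_iff, coeff_mul_eq_coeff_zero_mul hq]
  exact mul_ne_zero hp (mem_support_iff.mp he_min.1)

end MvPolynomial

theorem newtonPolyhedron_subset_of_forall_exists_le {n : ℕ}
    {G H : MvPolynomial (Fin n ⊕ Fin n) ℂ} (hGH : ∀ d ∈ G.support, ∃ e ∈ H.support, e ≤ d) :
    NewtonPolyhedron n G ⊆ NewtonPolyhedron n H := by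
  refine convexHull_mono fun ξ ⟨d, hd, hdξ⟩ => ?_
  obtain ⟨e, he, hed⟩ := hGH d hd
  refine ⟨e, he, fun i => le_trans ?_ (hdξ i)⟩
  exact_mod_cast add_le_add (hed (Sum.inl i)) (hed (Sum.inr i))

theorem stmt_18_general (n : ℕ) (h F : MvPolynomial (Fin n ⊕ Fin n) ℂ)
    (hh : MvPolynomial.coeff 0 h ≠ 0) :
    NewtonPolyhedron n (h * F) = NewtonPolyhedron n F :=
  (newtonPolyhedron_subset_of_forall_exists_le fun _ =>
    MvPolynomial.exists_mem_support_le_of_mem_support_mul).antisymm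
  (newtonPolyhedron_subset_of_forall_exists_le fun _ =>
    MvPolynomial.exists_mem_support_mul_le hh)

theorem stmt_18 (n : ℕ) (h F : MvPolynomial (Fin n ⊕ Fin n) ℂ)
    (hh : MvPolynomial.coeff 0 h ≠ 0) (hF : MvPolynomial.coeff 0 F = 0) :
    NewtonPolyhedron n (h * F) = NewtonPolyhedron n F :=
  stmt_18_general n h F hh
end
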